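/- For every positive integer n and every 0 ≤ i ≤ n-1, the h*-vector of the polynomial (k+1)^n − k^n (which has degree n−1) satisfies h*_i((k+1)^n − k^n) = A(n, i+1), where A(n,i) is the Eulerian number. -/

import Mathlib

/-!
The Eulerian numbers `A(n, i)` are the coefficients of `E = (1 - X)^(n+1) · Σ_m m^n X^m`; they
vanish for `i > n` because the `(n+1)`-st finite difference of `x ↦ x^n` is zero, so the
truncated sum `Σ_i A(n, i+1) C(k+n-1-i, n-1)` is a full convolution. Since
`Σ_m C(m, n-1) X^m = X^(n-1) / (1 - X)^n`, it is the coefficient of `X^(k+n)` in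
`E · X^(n-1) / (1 - X)^n = X^(n-1) (1 - X) Σ_m m^n X^m`, which is `(k+1)^n - k^n`.
-/

open Finset PowerSeries

/-- Eulerian number `A(n,i) = Σ_{j=0}^{i} (-1)^j C(n+1,j) (i-j)^n`. -/
def eulerianA (n i : ℕ) : ℤ :=
  ∑ j ∈ Finset.range (i + 1), (-1 : ℤ) ^ j * ((n + 1).choose j : ℤ) * ((i - j : ℕ) : ℤ) ^ n

noncomputable def eulerianSeries (n : ℕ) : ℤ⟦X⟧ :=
  (1 - X) ^ (n + 1) * PowerSeries.mk fun m => (m : ℤ) ^ n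

theorem coeff_one_sub_X_pow {R : Type*} [CommRing R] (m j : ℕ) :
    coeff j ((1 - X : R⟦X⟧) ^ m) = (-1) ^ j * m.choose j := by
  have : (1 - X : R⟦X⟧) ^ m = rescale (-1) (((1 + Polynomial.X) ^ m : Polynomial R) : R⟦X⟧) := by
    simp [sub_eq_add_neg]
  rw [this, coeff_rescale, Polynomial.coeff_coe, Polynomial.coeff_one_add_X_pow]

theorem coeff_succ_one_sub_X_mul {R : Type*} [Ring R] (f : R⟦X⟧) (k : ℕ) :
    coeff (k + 1) ((1 - X) * f) = coeff (k + 1) f - coeff k f := by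
  rw [sub_mul, one_mul, map_sub, coeff_succ_X_mul]

theorem mk_choose_eq_X_pow_mul_invOneSubPow {R : Type*} [CommRing R] (r : ℕ) :
    (PowerSeries.mk fun m => (m.choose r : R)) = X ^ r * (invOneSubPow R (r + 1)).val := by
  ext m
  rw [invOneSubPow_val_succ_eq_mk_add_choose, coeff_X_pow_mul', coeff_mk]
  split_ifs with h
  · rw [coeff_mk, Nat.add_sub_cancel' h]
  · rw [Nat.choose_eq_zero_of_lt (not_le.1 h), Nat.cast_zero]

theorem coeff_eulerianSeries (n i : ℕ) : coeff i (eulerianSeries n) = eulerianA n i := by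
  rw [eulerianSeries, coeff_mul, Nat.sum_antidiagonal_eq_sum_range_succ_mk, eulerianA]
  simp [coeff_one_sub_X_pow]

theorem eulerianA_zero {n : ℕ} (hn : n ≠ 0) : eulerianA n 0 = 0 := by
  simp [eulerianA, hn]

theorem eulerianA_eq_zero_of_lt {n i : ℕ} (h : n < i) : eulerianA n i = 0 := by
  obtain ⟨m, rfl⟩ := Nat.exists_eq_add_of_lt h
  have hdiff := congr_fun (fwdDiff_iter_pow_eq_zero_of_lt (R := ℤ) (Nat.lt_succ_self n)) (m : ℤ)
  rw [fwdDiff_iter_eq_sum_shift, Pi.zero_apply] at hdiff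
  rw [eulerianA, ← hdiff, ← sum_subset (range_subset_range.2 (by omega : n + 2 ≤ n + m + 1 + 1)),
    ← sum_range_reflect]
  · refine sum_congr rfl fun j hj => ?_
    have hj := mem_range.1 hj
    have hexp : n + 2 - 1 - j = n + 1 - j := by omega
    have hbase : ((n + m + 1 - (n + 1 - j) : ℕ) : ℤ) = m + j := by omega
    rw [hexp, hbase, Nat.choose_symm (by omega), smul_eq_mul, nsmul_one]
  · intro j _ hj
    rw [Nat.choose_eq_zero_of_lt (by simp at hj; omega)]
    simp

theorem sum_eulerianA_mul_choose_eq_coeff (r k : ℕ) :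
    ∑ i ∈ range (r + 1), eulerianA (r + 1) (i + 1) * ((k + r - i).choose r : ℤ) =
      coeff (k + r + 1) (eulerianSeries (r + 1) * PowerSeries.mk fun m => (m.choose r : ℤ)) := by
  rw [coeff_mul, Nat.sum_antidiagonal_eq_sum_range_succ_mk]
  simp only [coeff_eulerianSeries, coeff_mk]
  rw [← sum_subset (range_subset_range.2 (by omega : r + 1 + 1 ≤ k + r + 1 + 1)),
    sum_range_succ' _ (r + 1), eulerianA_zero r.succ_ne_zero, zero_mul, add_zero]
  · exact sum_congr rfl fun i _ => by rw [Nat.add_sub_add_right]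
  · intro i _ hi
    rw [eulerianA_eq_zero_of_lt (by simp at hi; omega), zero_mul]

theorem coeff_eulerianSeries_mul_mk_choose (r k : ℕ) :
    coeff (k + r + 1) (eulerianSeries (r + 1) * PowerSeries.mk fun m => (m.choose r : ℤ)) =
      ((k : ℤ) + 1) ^ (r + 1) - (k : ℤ) ^ (r + 1) := by
  set P : ℤ⟦X⟧ := PowerSeries.mk fun m => (m : ℤ) ^ (r + 1)
  have hcancel : (1 - X : ℤ⟦X⟧) ^ (r + 1 + 1) * (invOneSubPow ℤ (r + 1)).val = 1 - X := by
    simpa [add_comm] using one_sub_pow_add_mul_invOneSubPow_val_eq_one_sub_pow ℤ 1 (r + 1)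
  have hseries : eulerianSeries (r + 1) * PowerSeries.mk (fun m => (m.choose r : ℤ)) =
      X ^ r * ((1 - X) * P) :=
    calc _ = X ^ r * P * ((1 - X) ^ (r + 1 + 1) * (invOneSubPow ℤ (r + 1)).val) := by
          rw [eulerianSeries, mk_choose_eq_X_pow_mul_invOneSubPow]; ring
      _ = X ^ r * ((1 - X) * P) := by rw [hcancel]; ring
  rw [hseries, show k + r + 1 = k + 1 + r by ring, coeff_X_pow_mul, coeff_succ_one_sub_X_mul,
    coeff_mk, coeff_mk]
  push_cast
  rfl

/-- The h*-vector of the degree-`(n-1)` polynomial `(k+1)^n − k^n` has entries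
`h*_i = A(n,i+1)`, i.e. `(k+1)^n − k^n = Σ_{i=0}^{n-1} A(n,i+1) · C(k+n-1-i, n-1)`. -/
theorem hstar_succ_pow_sub_pow (n : ℕ) (hn : 1 ≤ n) (k : ℕ) :
    ((k : ℤ) + 1) ^ n - (k : ℤ) ^ n =
      ∑ i ∈ Finset.range n, eulerianA n (i + 1) * ((k + (n - 1) - i).choose (n - 1) : ℤ) := by
  obtain ⟨r, rfl⟩ := Nat.exists_eq_add_of_le' hn
  rw [Nat.add_sub_cancel, sum_eulerianA_mul_choose_eq_coeff, coeff_eulerianSeries_mul_mk_choose]
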